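/- For the Gaussian density φ with mean μ and covariance Σ = Q Δ Qᵗ (Δ = diag(a₁,…,a_d, b,…,b), Q orthogonal), −2 log φ(x) = ‖μ − P(x)‖²_A + (1/b)‖x − P(x)‖² + Σ_{j=1}^{d} log a_j + (p−d) log b + p log(2π), where P(x) = Q̃ Q̃ᵗ (x − μ) + μ is the affine projection onto the span of the first d eigenvectors translated to μ, and ‖y‖²_A = yᵗ Q̃ Δ⁻¹ Q̃ᵗ y. -/

import Mathlib

open Matrix

/-- `Q` with its last `p - d` columns replaced by zero columns. -/
def zeroLastCols {p : ℕ} (d : ℕ) (Q : Matrix (Fin p) (Fin p) ℝ) :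
    Matrix (Fin p) (Fin p) ℝ :=
  Matrix.of fun i j => if (j : ℕ) < d then Q i j else 0

/-- Density of the multivariate Gaussian `N_p(μ, S)`. -/
noncomputable def gaussPdf {p : ℕ} (μ : Fin p → ℝ) (S : Matrix (Fin p) (Fin p) ℝ)
    (x : Fin p → ℝ) : ℝ :=
  (2 * Real.pi) ^ (-(p : ℝ) / 2) * S.det ^ (-(1 : ℝ) / 2) *
    Real.exp (-((x - μ) ⬝ᵥ (S⁻¹ *ᵥ (x - μ))) / 2)

/-!
Write `Δ = diag δ`. In the eigenbasis of `Σ`, i.e. for `z = Qᵀ (x - μ)`, the quadratic form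
of the density is `zᵀ Δ⁻¹ z = ∑ⱼ zⱼ² / δⱼ`. With `E` the coordinate projection onto the first `d` coordinates,
`Q̃ = Q E`, so `Q̃ᵀ (μ - P) = -E z` and `Qᵀ (x - P) = z - E z`: the first `d` terms of the sum
are `‖μ - P‖²_A` and, since `δⱼ = b` for the others, the remaining ones are `‖x - P‖² / b`.
The log-determinant is `∑ log aⱼ + (p - d) log b` because `det Σ = det Δ`.
-/

theorem neg_two_mul_log_gaussPdf {p : ℕ} (μ : Fin p → ℝ) {S : Matrix (Fin p) (Fin p) ℝ}
    (hS : 0 < S.det) (x : Fin p → ℝ) :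
    -2 * Real.log (gaussPdf μ S x) =
      (x - μ) ⬝ᵥ (S⁻¹ *ᵥ (x - μ)) + Real.log S.det + p * Real.log (2 * Real.pi) := by
  have h2π : 0 < 2 * Real.pi := by positivity
  rw [gaussPdf, Real.log_mul (by positivity) (Real.exp_ne_zero _),
    Real.log_mul (by positivity) (by positivity), Real.log_exp, Real.log_rpow h2π,
    Real.log_rpow hS]
  ring

theorem Fin.sum_dite_lt {M : Type*} [AddCommMonoid M] {p d : ℕ} (hdp : d ≤ p)
    (f : Fin d → M) (c : M) :
    ∑ j : Fin p, (if h : (j : ℕ) < d then f ⟨j, h⟩ else c) = ∑ j, f j + (p - d) • c := by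
  obtain ⟨k, rfl⟩ := Nat.exists_eq_add_of_le hdp
  simp [Fin.sum_univ_add]

namespace Matrix

variable {n R : Type*} [CommRing R]

theorem dotProduct_mul_mul_transpose_mulVec [Fintype n] (B A : Matrix n n R) (u v : n → R) :
    u ⬝ᵥ ((B * A * Bᵀ) *ᵥ v) = (Bᵀ *ᵥ u) ⬝ᵥ (A *ᵥ (Bᵀ *ᵥ v)) := by
  rw [← mulVec_mulVec, ← mulVec_mulVec, dotProduct_mulVec, ← mulVec_transpose]

section Orthogonal

variable [Fintype n] [DecidableEq n] {Q : Matrix n n R}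

theorem inv_mul_mul_transpose_of_mem_orthogonalGroup (hQ : Q ∈ orthogonalGroup n R)
    (A : Matrix n n R) : (Q * A * Qᵀ)⁻¹ = Q * A⁻¹ * Qᵀ := by
  rw [mul_inv_rev, mul_inv_rev, inv_eq_left_inv ((mem_orthogonalGroup_iff' n R).mp hQ),
    inv_eq_left_inv ((mem_orthogonalGroup_iff n R).mp hQ), Matrix.mul_assoc]

theorem det_mul_mul_transpose_of_mem_orthogonalGroup (hQ : Q ∈ orthogonalGroup n R)
    (A : Matrix n n R) : (Q * A * Qᵀ).det = A.det := by
  have h : Q.det * Qᵀ.det = 1 := by rw [← det_mul, (mem_orthogonalGroup_iff n R).mp hQ, det_one]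
  rw [det_mul, det_mul]
  linear_combination A.det * h

theorem dotProduct_transpose_mulVec_of_mem_orthogonalGroup (hQ : Q ∈ orthogonalGroup n R)
    (u v : n → R) : (Qᵀ *ᵥ u) ⬝ᵥ (Qᵀ *ᵥ v) = u ⬝ᵥ v := by
  calc (Qᵀ *ᵥ u) ⬝ᵥ (Qᵀ *ᵥ v) = (Qᵀ *ᵥ u) ⬝ᵥ ((1 : Matrix n n R) *ᵥ (Qᵀ *ᵥ v)) := by
        rw [one_mulVec]
    _ = u ⬝ᵥ v := by
        rw [← dotProduct_mul_mul_transpose_mulVec, Matrix.mul_one,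
          (mem_orthogonalGroup_iff n R).mp hQ, one_mulVec]

end Orthogonal

theorem inv_diagonal_of_ne_zero {K : Type*} [Field K] [Fintype n] [DecidableEq n] {δ : n → K}
    (hδ : ∀ j, δ j ≠ 0) : (diagonal δ)⁻¹ = diagonal δ⁻¹ := by
  refine inv_eq_right_inv ?_
  rw [diagonal_mul_diagonal, ← diagonal_one]
  exact congrArg diagonal (funext fun j => mul_inv_cancel₀ (hδ j))

section CoordProj

variable (R) [DecidableEq n] (s : n → Prop) [DecidablePred s]

def coordProj : Matrix n n R :=
  diagonal fun j => if s j then 1 else 0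

theorem transpose_coordProj : (coordProj R s)ᵀ = coordProj R s :=
  diagonal_transpose _

variable [Fintype n]

theorem coordProj_mulVec_apply (z : n → R) (j : n) :
    (coordProj R s *ᵥ z) j = if s j then z j else 0 := by
  simp [coordProj, mulVec_diagonal]

theorem coordProj_mul_self : coordProj R s * coordProj R s = coordProj R s := by
  rw [coordProj, diagonal_mul_diagonal]
  congr 1
  ext j
  split_ifs <;> simp

variable {R s} in
theorem dotProduct_diagonal_mulVec_eq_add {w : n → R} {c : R} (hw : ∀ j, ¬ s j → w j = c)
    (z : n → R) :
    z ⬝ᵥ (diagonal w *ᵥ z) =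
      (coordProj R s *ᵥ z) ⬝ᵥ (diagonal w *ᵥ (coordProj R s *ᵥ z)) +
        c * ((z - coordProj R s *ᵥ z) ⬝ᵥ (z - coordProj R s *ᵥ z)) := by
  simp only [dotProduct, mulVec_diagonal, coordProj_mulVec_apply R s, Pi.sub_apply,
    Finset.mul_sum, ← Finset.sum_add_distrib]
  refine Finset.sum_congr rfl fun j _ => ?_
  by_cases h : s j
  · simp [h]
  · simp [h, hw j h]
    ring

end CoordProj

end Matrix

section ZeroLastCols

variable {p : ℕ} (d : ℕ) {Q : Matrix (Fin p) (Fin p) ℝ}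

theorem zeroLastCols_eq_mul_coordProj :
    zeroLastCols d Q = Q * coordProj ℝ fun j : Fin p => (j : ℕ) < d := by
  ext i j
  simp [zeroLastCols, coordProj, mul_diagonal]

theorem transpose_zeroLastCols :
    (zeroLastCols d Q)ᵀ = (coordProj ℝ fun j : Fin p => (j : ℕ) < d) * Qᵀ := by
  rw [zeroLastCols_eq_mul_coordProj, transpose_mul, transpose_coordProj]

theorem transpose_mul_zeroLastCols (hQ : Q ∈ orthogonalGroup (Fin p) ℝ) :
    Qᵀ * zeroLastCols d Q = coordProj ℝ fun j : Fin p => (j : ℕ) < d := by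
  rw [zeroLastCols_eq_mul_coordProj, ← Matrix.mul_assoc, (mem_orthogonalGroup_iff' _ ℝ).mp hQ,
    Matrix.one_mul]

theorem transpose_zeroLastCols_mul_zeroLastCols (hQ : Q ∈ orthogonalGroup (Fin p) ℝ) :
    (zeroLastCols d Q)ᵀ * zeroLastCols d Q = coordProj ℝ fun j : Fin p => (j : ℕ) < d := by
  rw [transpose_zeroLastCols, Matrix.mul_assoc, transpose_mul_zeroLastCols d hQ,
    coordProj_mul_self]

theorem transpose_mul_zeroLastCols_mul_transpose (hQ : Q ∈ orthogonalGroup (Fin p) ℝ) :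
    Qᵀ * (zeroLastCols d Q * (zeroLastCols d Q)ᵀ) =
      (coordProj ℝ fun j : Fin p => (j : ℕ) < d) * Qᵀ := by
  rw [← Matrix.mul_assoc, transpose_mul_zeroLastCols d hQ, transpose_zeroLastCols,
    ← Matrix.mul_assoc, coordProj_mul_self]

theorem transpose_zeroLastCols_mul_zeroLastCols_mul_transpose
    (hQ : Q ∈ orthogonalGroup (Fin p) ℝ) :
    (zeroLastCols d Q)ᵀ * (zeroLastCols d Q * (zeroLastCols d Q)ᵀ) =
      (coordProj ℝ fun j : Fin p => (j : ℕ) < d) * Qᵀ := by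
  rw [← Matrix.mul_assoc, transpose_zeroLastCols_mul_zeroLastCols d hQ, transpose_zeroLastCols,
    ← Matrix.mul_assoc, coordProj_mul_self]

end ZeroLastCols

theorem log_det_diagonal_dite {p d : ℕ} (hdp : d ≤ p) {a : Fin d → ℝ} {b : ℝ}
    (ha : ∀ j, a j ≠ 0) (hb : b ≠ 0) :
    Real.log (diagonal fun j : Fin p => if h : (j : ℕ) < d then a ⟨j, h⟩ else b).det =
      ∑ j, Real.log (a j) + (p - d : ℕ) * Real.log b := by
  rw [det_diagonal, Real.log_prod fun j _ => by split_ifs <;> simp [ha, hb]]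
  simp only [apply_dite Real.log]
  rw [Fin.sum_dite_lt hdp fun j => Real.log (a j), nsmul_eq_mul]

theorem stmt_11_general {p d : ℕ} (hdp : d ≤ p - 1)
    (Q : Matrix (Fin p) (Fin p) ℝ) (hQ : Q ∈ Matrix.orthogonalGroup (Fin p) ℝ)
    (a : Fin d → ℝ) (b : ℝ) (ha : ∀ j, 0 < a j) (hb : 0 < b)
    (Δ : Matrix (Fin p) (Fin p) ℝ)
    (hΔ : Δ = Matrix.diagonal
      (fun j : Fin p => if h : (j : ℕ) < d then a ⟨j, h⟩ else b))
    (x μ P : Fin p → ℝ)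
    (hP : P = (zeroLastCols d Q * (zeroLastCols d Q)ᵀ) *ᵥ (x - μ) + μ) :
    -2 * Real.log (gaussPdf μ (Q * Δ * Qᵀ) x) =
      (μ - P) ⬝ᵥ ((zeroLastCols d Q * Δ⁻¹ * (zeroLastCols d Q)ᵀ) *ᵥ (μ - P)) +
        (1 / b) * ((x - P) ⬝ᵥ (x - P)) +
        (∑ j : Fin d, Real.log (a j)) + (p - d : ℕ) * Real.log b +
        p * Real.log (2 * Real.pi) := by
  set δ : Fin p → ℝ := fun j => if h : (j : ℕ) < d then a ⟨j, h⟩ else b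
  have hδ : ∀ j, 0 < δ j := fun j => by dsimp only [δ]; split_ifs <;> simp [ha, hb]
  subst hΔ
  set E := coordProj ℝ fun j : Fin p => (j : ℕ) < d
  set z := Qᵀ *ᵥ (x - μ)
  have hμP : (zeroLastCols d Q)ᵀ *ᵥ (μ - P) = -(E *ᵥ z) := by
    rw [hP, sub_add_cancel_right, mulVec_neg, mulVec_mulVec,
      transpose_zeroLastCols_mul_zeroLastCols_mul_transpose d hQ, ← mulVec_mulVec]
  have hxP : Qᵀ *ᵥ (x - P) = z - E *ᵥ z := by
    rw [hP, sub_add_eq_sub_sub_swap, mulVec_sub, mulVec_mulVec,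
      transpose_mul_zeroLastCols_mul_transpose d hQ, ← mulVec_mulVec]
  have hdet : 0 < (Q * diagonal δ * Qᵀ).det := by
    rw [det_mul_mul_transpose_of_mem_orthogonalGroup hQ, det_diagonal]
    exact Finset.prod_pos fun j _ => hδ j
  have hquad : (x - μ) ⬝ᵥ ((Q * diagonal δ * Qᵀ)⁻¹ *ᵥ (x - μ)) =
      (μ - P) ⬝ᵥ ((zeroLastCols d Q * (diagonal δ)⁻¹ * (zeroLastCols d Q)ᵀ) *ᵥ (μ - P)) +
        b⁻¹ * ((x - P) ⬝ᵥ (x - P)) := by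
    rw [inv_mul_mul_transpose_of_mem_orthogonalGroup hQ,
      inv_diagonal_of_ne_zero fun j => (hδ j).ne', dotProduct_mul_mul_transpose_mulVec,
      dotProduct_mul_mul_transpose_mulVec, hμP,
      ← dotProduct_transpose_mulVec_of_mem_orthogonalGroup hQ (x - P), hxP, mulVec_neg,
      neg_dotProduct, dotProduct_neg, neg_neg]
    exact dotProduct_diagonal_mulVec_eq_add (fun j hj => by simp [δ, hj]) z
  rw [neg_two_mul_log_gaussPdf μ hdet, hquad, det_mul_mul_transpose_of_mem_orthogonalGroup hQ,
    log_det_diagonal_dite (hdp.trans (Nat.sub_le p 1)) (fun j => (ha j).ne') hb.ne', one_div]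
  ring

theorem stmt_11 {p d : ℕ} (hp : 2 ≤ p) (hd : 1 ≤ d) (hdp : d ≤ p - 1)
    (Q : Matrix (Fin p) (Fin p) ℝ) (hQ : Q ∈ Matrix.orthogonalGroup (Fin p) ℝ)
    (a : Fin d → ℝ) (b : ℝ) (ha : ∀ j, 0 < a j) (hb : 0 < b)
    (Δ : Matrix (Fin p) (Fin p) ℝ)
    (hΔ : Δ = Matrix.diagonal
      (fun j : Fin p => if h : (j : ℕ) < d then a ⟨j, h⟩ else b))
    (x μ P : Fin p → ℝ)
    (hP : P = (zeroLastCols d Q * (zeroLastCols d Q)ᵀ) *ᵥ (x - μ) + μ) :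
    -2 * Real.log (gaussPdf μ (Q * Δ * Qᵀ) x) =
      (μ - P) ⬝ᵥ ((zeroLastCols d Q * Δ⁻¹ * (zeroLastCols d Q)ᵀ) *ᵥ (μ - P)) +
        (1 / b) * ((x - P) ⬝ᵥ (x - P)) +
        (∑ j : Fin d, Real.log (a j)) + (p - d : ℕ) * Real.log b +
        p * Real.log (2 * Real.pi) :=
  stmt_11_general hdp Q hQ a b ha hb Δ hΔ x μ P hP
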